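/- Every nontrivial normal subgroup N of Γ contains a subgroup H that admits a surjective group homomorphism onto Γ. -/

import Mathlib

namespace PinkGroup

mutual
  /-- forward action of the generator `a` -/
  def aF : List Bool → List Bool
    | [] => []
    | false :: w => true :: bF w
    | true :: w => false :: w
  /-- forward action of the generator `b` -/
  def bF : List Bool → List Bool
    | [] => []
    | false :: w => false :: aF w
    | true :: w => true :: w
end

mutual
  /-- inverse of `aF` -/
  def aIF : List Bool → List Bool
    | [] => []
    | true :: w => false :: bIF w
    | false :: w => true :: w
  /-- inverse of `bF` -/
  def bIF : List Bool → List Bool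
    | [] => []
    | false :: w => false :: aIF w
    | true :: w => true :: w
end

lemma inv_all (w : List Bool) :
    aF (aIF w) = w ∧ bF (bIF w) = w ∧ aIF (aF w) = w ∧ bIF (bF w) = w := by
  induction w with
  | nil => simp [aF, bF, aIF, bIF]
  | cons x w ih =>
    cases x <;>
      simp [aF, bF, aIF, bIF, ih.1, ih.2.1, ih.2.2.1, ih.2.2.2]

/-- The generator `a` of Pink's group: `(1w)^a = 2 w^b`, `(2w)^a = 1w`
(where the letter `1` is `false` and the letter `2` is `true`). -/
def a : Equiv.Perm (List Bool) :=
  ⟨aF, aIF, fun w => (inv_all w).2.2.1, fun w => (inv_all w).1⟩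

/-- The generator `b` of Pink's group: `(1w)^b = 1 w^a`, `(2w)^b = 2w`. -/
def b : Equiv.Perm (List Bool) :=
  ⟨bF, bIF, fun w => (inv_all w).2.2.2, fun w => (inv_all w).2.1⟩

/-- Pink's group `Γ`, the iterated monodromy group of `z^2 - 1`. -/
def Gam : Subgroup (Equiv.Perm (List Bool)) := Subgroup.closure {a, b}

lemma a_mem : a ∈ Gam := Subgroup.subset_closure (by simp)

lemma b_mem : b ∈ Gam := Subgroup.subset_closure (by simp)


open Subgroup List
open scoped commutatorElement

abbrev G := Equiv.Perm (List Bool)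

@[simp] lemma a_apply (w : List Bool) : a w = aF w := rfl
@[simp] lemma b_apply (w : List Bool) : b w = bF w := rfl
@[simp] lemma a_inv_apply (w : List Bool) : a⁻¹ w = aIF w := rfl
@[simp] lemma b_inv_apply (w : List Bool) : b⁻¹ w = bIF w := rfl

lemma len_ab (w : List Bool) : (aF w).length = w.length ∧ (bF w).length = w.length := by
  induction w with
  | nil => simp [aF, bF]
  | cons x w ih => cases x <;> simp [aF, bF, ih.1, ih.2]

lemma pre_ab (u : List Bool) : ∀ w, (∃ s, aF (u ++ w) = aF u ++ s) ∧ (∃ s, bF (u ++ w) = bF u ++ s) := by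
  induction u with
  | nil => intro w; exact ⟨⟨aF w, by simp [aF]⟩, ⟨bF w, by simp [bF]⟩⟩
  | cons x u ih =>
    intro w
    obtain ⟨⟨s1, hs1⟩, ⟨s2, hs2⟩⟩ := ih w
    cases x
    · exact ⟨⟨s2, by simp [aF, hs2]⟩, ⟨s1, by simp [bF, hs1]⟩⟩
    · exact ⟨⟨w, by simp [aF]⟩, ⟨w, by simp [bF]⟩⟩

/-- length- and prefix- preserving permutations -/
def Auto : Subgroup G where
  carrier := {g | (∀ w, (g w).length = w.length) ∧ ∀ u w, ∃ s, g (u ++ w) = g u ++ s}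
  one_mem' := ⟨fun w => rfl, fun u w => ⟨w, rfl⟩⟩
  mul_mem' := by
    rintro g h ⟨gl, gp⟩ ⟨hl, hp⟩
    refine ⟨fun w => by simp [Equiv.Perm.mul_apply, gl, hl], fun u w => ?_⟩
    obtain ⟨s, hs⟩ := hp u w
    obtain ⟨t, ht⟩ := gp (h u) s
    exact ⟨t, by simp [Equiv.Perm.mul_apply, hs, ht]⟩
  inv_mem' := by
    rintro g ⟨gl, gp⟩
    constructor
    · intro w
      conv_rhs => rw [← (show g (g⁻¹ w) = w from Equiv.apply_symm_apply g w)]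
      rw [gl]
    · intro u w
      set t := g⁻¹ (u ++ w) with hlt
      have hgt : g t = u ++ w := Equiv.apply_symm_apply g (u ++ w)
      have htl : t.length = u.length + w.length := by
        have := gl t
        rw [hgt] at this
        simpa using this.symm
      obtain ⟨s, hs⟩ := gp (t.take u.length) (t.drop u.length)
      rw [take_append_drop, hgt] at hs
      have hlen : (g (t.take u.length)).length = u.length := by
        rw [gl, length_take, htl]; omega
      have hgu : g (t.take u.length) = u := by
        have h2 : take u.length (u ++ w) = take u.length (g (take u.length t) ++ s) := by
          rw [← hs]
        rw [take_left' hlen] at h2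
        rw [take_left] at h2
        exact h2.symm
      have h3 : g⁻¹ (g (take u.length t)) = take u.length t :=
        Equiv.symm_apply_apply g _
      rw [hgu] at h3
      exact ⟨t.drop u.length, by rw [h3]; exact (take_append_drop _ _).symm⟩

lemma a_mem_Auto : a ∈ Auto := ⟨fun w => (len_ab w).1, fun u w => (pre_ab u w).1⟩
lemma b_mem_Auto : b ∈ Auto := ⟨fun w => (len_ab w).2, fun u w => (pre_ab u w).2⟩

lemma Gam_le_Auto : Gam ≤ Auto := by
  rw [Gam, closure_le]
  rintro x (rfl | rfl)
  exacts [a_mem_Auto, b_mem_Auto]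

lemma auto_nil {g : G} (hg : g ∈ Auto) : g [] = [] := by
  have := hg.1 []
  simpa using this

lemma auto_len {g : G} (hg : g ∈ Auto) (w : List Bool) : (g w).length = w.length := hg.1 w

lemma auto_pre {g : G} (hg : g ∈ Auto) (u w : List Bool) : ∃ s, g (u ++ w) = g u ++ s := hg.2 u w

----------------------------------------------------------------
-- the first-level stabilizer and the section homomorphism
----------------------------------------------------------------

/-- first-level stabilizer inside `Auto` -/
def St : Subgroup G where
  carrier := {g | g ∈ Auto ∧ g [false] = [false] ∧ g [true] = [true]}
  one_mem' := ⟨Auto.one_mem, rfl, rfl⟩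
  mul_mem' := by
    rintro g h ⟨ga, gf, gt⟩ ⟨ha, hf, ht⟩
    exact ⟨Auto.mul_mem ga ha, by simp [Equiv.Perm.mul_apply, hf, gf],
      by simp [Equiv.Perm.mul_apply, ht, gt]⟩
  inv_mem' := by
    rintro g ⟨ga, gf, gt⟩
    refine ⟨Auto.inv_mem ga, ?_, ?_⟩
    · conv_lhs => rw [← gf]
      exact Equiv.symm_apply_apply g _
    · conv_lhs => rw [← gt]
      exact Equiv.symm_apply_apply g _

lemma st_false {g : G} (hg : g ∈ St) (w : List Bool) :
    g (false :: w) = false :: (g (false :: w)).tail := by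
  obtain ⟨s, hs⟩ := auto_pre hg.1 [false] w
  rw [hg.2.1] at hs
  simp only [show ([false] : List Bool) ++ w = false :: w from rfl] at hs
  rw [hs]; rfl

lemma st_true {g : G} (hg : g ∈ St) (w : List Bool) :
    g (true :: w) = true :: (g (true :: w)).tail := by
  obtain ⟨s, hs⟩ := auto_pre hg.1 [true] w
  rw [hg.2.2] at hs
  simp only [show ([true] : List Bool) ++ w = true :: w from rfl] at hs
  rw [hs]; rfl

/-- the section of a first-level stabilizer at the vertex `false` -/
def sec (p : ↥St) : G where
  toFun w := (p.1 (false :: w)).tail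
  invFun w := ((p⁻¹ : ↥St).1 (false :: w)).tail
  left_inv := by
    intro w
    have h1 := st_false p.2 w
    have h2 : (p⁻¹ : ↥St).1 (false :: (p.1 (false :: w)).tail) = false :: w := by
      rw [← h1]
      simp only [Subgroup.coe_inv]
      exact Equiv.symm_apply_apply _ _
    show ((p⁻¹ : ↥St).1 (false :: (p.1 (false :: w)).tail)).tail = w
    rw [h2]
    rfl
  right_inv := by
    intro w
    have h1 := st_false (p⁻¹ : ↥St).2 w
    have h2 : p.1 (false :: ((p⁻¹ : ↥St).1 (false :: w)).tail) = false :: w := by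
      rw [← h1]
      simp only [Subgroup.coe_inv]
      exact Equiv.apply_symm_apply _ _
    show (p.1 (false :: ((p⁻¹ : ↥St).1 (false :: w)).tail)).tail = w
    rw [h2]
    rfl

lemma sec_apply (p : ↥St) (w : List Bool) : sec p w = (p.1 (false :: w)).tail := rfl

lemma st_false' (p : ↥St) (w : List Bool) : p.1 (false :: w) = false :: sec p w :=
  st_false p.2 w

lemma sec_mul (p q : ↥St) : sec (p * q) = sec p * sec q := by
  apply Equiv.ext
  intro w
  rw [Equiv.Perm.mul_apply]
  show ((p * q).1 (false :: w)).tail = sec p (sec q w)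
  rw [Subgroup.coe_mul, Equiv.Perm.mul_apply, st_false' q, st_false' p]
  rfl

/-- the section at `false` as a homomorphism -/
def secHom : ↥St →* G := MonoidHom.mk' sec sec_mul

lemma secHom_apply (p : ↥St) : secHom p = sec p := rfl

open Classical in
noncomputable def secFun (g : G) : G := if h : g ∈ St then sec ⟨g, h⟩ else 1

lemma secFun_eq {g : G} (h : g ∈ St) : secFun g = sec ⟨g, h⟩ := by
  unfold secFun
  exact dif_pos h

lemma secFun_mul {g h : G} (hg : g ∈ St) (hh : h ∈ St) :
    secFun (g * h) = secFun g * secFun h := by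
  rw [secFun_eq (St.mul_mem hg hh), secFun_eq hg, secFun_eq hh]
  exact sec_mul ⟨g, hg⟩ ⟨h, hh⟩

lemma secFun_inv {g : G} (hg : g ∈ St) : secFun g⁻¹ = (secFun g)⁻¹ := by
  rw [secFun_eq (St.inv_mem hg), secFun_eq hg]
  exact map_inv secHom ⟨g, hg⟩

lemma secFun_one : secFun 1 = 1 := by
  rw [secFun_eq St.one_mem]
  exact map_one secHom

----------------------------------------------------------------
-- the commutator cc = [a,b], explicit section values
----------------------------------------------------------------

/-- the commutator `[a,b]` -/
def cc : G := a * b * a⁻¹ * b⁻¹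

lemma cc_mem_Gam : cc ∈ Gam :=
  Gam.mul_mem (Gam.mul_mem (Gam.mul_mem a_mem b_mem) (Gam.inv_mem a_mem)) (Gam.inv_mem b_mem)

lemma b_mem_St : b ∈ St := by
  refine ⟨b_mem_Auto, ?_, ?_⟩ <;> simp [aF, bF]

lemma a2_mem_St : a * a ∈ St := by
  refine ⟨Auto.mul_mem a_mem_Auto a_mem_Auto, ?_, ?_⟩ <;>
    simp [Equiv.Perm.mul_apply, aF, bF]

lemma cc_mem_St : cc ∈ St := by
  refine ⟨Gam_le_Auto cc_mem_Gam, ?_, ?_⟩ <;>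
    simp [cc, Equiv.Perm.mul_apply, aF, bF, aIF, bIF]

lemma sec_b (h : b ∈ St) : sec ⟨b, h⟩ = a := by
  apply Equiv.ext
  intro w
  rw [sec_apply]
  simp [bF]

lemma sec_a2 (h : a * a ∈ St) : sec ⟨a * a, h⟩ = b := by
  apply Equiv.ext
  intro w
  rw [sec_apply]
  simp [Equiv.Perm.mul_apply, aF, bF]

lemma sec_cc (h : cc ∈ St) : sec ⟨cc, h⟩ = a⁻¹ := by
  apply Equiv.ext
  intro w
  rw [sec_apply]
  simp [cc, Equiv.Perm.mul_apply, aF, bF, aIF, bIF]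

lemma secFun_b : secFun b = a := by rw [secFun_eq b_mem_St, sec_b]
lemma secFun_a2 : secFun (a * a) = b := by rw [secFun_eq a2_mem_St, sec_a2]
lemma secFun_cc : secFun cc = a⁻¹ := by rw [secFun_eq cc_mem_St, sec_cc]

----------------------------------------------------------------
-- lifting a permutation into the subtree at a vertex v
----------------------------------------------------------------

/-- the permutation acting as `x` inside the subtree at `v` and trivially elsewhere -/
def liftF (v : List Bool) (x : G) : G where
  toFun u := if v <+: u then v ++ x (u.drop v.length) else u
  invFun u := if v <+: u then v ++ x⁻¹ (u.drop v.length) else u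
  left_inv := by
    intro u
    by_cases h : v <+: u
    · obtain ⟨t, rfl⟩ := h
      simp [prefix_append, drop_left, Equiv.symm_apply_apply]
    · simp [h]
  right_inv := by
    intro u
    by_cases h : v <+: u
    · obtain ⟨t, rfl⟩ := h
      simp [prefix_append, drop_left, Equiv.apply_symm_apply]
    · simp [h]

lemma liftF_app_pre (v t : List Bool) (x : G) : liftF v x (v ++ t) = v ++ x t := by
  simp [liftF, prefix_append, drop_left]

lemma liftF_app_not {v u : List Bool} (h : ¬ v <+: u) (x : G) : liftF v x u = u := by
  simp [liftF, h]

lemma liftF_mul (v : List Bool) (x y : G) :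
    liftF v (x * y) = liftF v x * liftF v y := by
  apply Equiv.ext
  intro u
  rw [Equiv.Perm.mul_apply]
  by_cases h : v <+: u
  · obtain ⟨t, rfl⟩ := h
    rw [liftF_app_pre, liftF_app_pre, liftF_app_pre, Equiv.Perm.mul_apply]
  · rw [liftF_app_not h, liftF_app_not h, liftF_app_not h]

/-- `liftF v` as a homomorphism -/
def liftFHom (v : List Bool) : G →* G := MonoidHom.mk' (liftF v) (liftF_mul v)

lemma liftF_inv (v : List Bool) (x : G) : (liftF v x)⁻¹ = liftF v x⁻¹ :=
  (map_inv (liftFHom v) x).symm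

lemma liftF_nil (x : G) : liftF [] x = x := by
  apply Equiv.ext
  intro u
  simp [liftF]

lemma liftF_cons (e : Bool) (v : List Bool) (x : G) :
    liftF (e :: v) x = liftF [e] (liftF v x) := by
  apply Equiv.ext
  intro u
  cases u with
  | nil =>
    rw [liftF_app_not (by simp) x, liftF_app_not (by simp) (liftF v x)]
  | cons e' u' =>
    by_cases he : e = e'
    · subst he
      by_cases hv : v <+: u'
      · obtain ⟨t, rfl⟩ := hv
        show liftF (e :: v) x ((e :: v) ++ t) = liftF [e] (liftF v x) ([e] ++ (v ++ t))
        rw [liftF_app_pre, liftF_app_pre, liftF_app_pre]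
        simp
      · have h1 : ¬ (e :: v) <+: (e :: u') := by
          rw [cons_prefix_cons]; tauto
        rw [liftF_app_not h1]
        have h2 : e :: u' = [e] ++ u' := rfl
        rw [h2, liftF_app_pre, liftF_app_not hv]
    · have h1 : ¬ (e :: v) <+: (e' :: u') := by
        rw [cons_prefix_cons]; tauto
      have h2 : ¬ ([e] : List Bool) <+: (e' :: u') := by
        rw [cons_prefix_cons]; tauto
      rw [liftF_app_not h1, liftF_app_not h2]

lemma liftF_inj {v : List Bool} {x y : G} (h : liftF v x = liftF v y) : x = y := by
  apply Equiv.ext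
  intro t
  have h1 := congrArg (fun p : G => p (v ++ t)) h
  simp only [liftF_app_pre] at h1
  exact append_cancel_left h1

lemma liftF_mem_St_false {x : G} (hA : liftF [false] x ∈ Auto) (hnil : x [] = []) :
    liftF [false] x ∈ St := by
  refine ⟨hA, ?_, ?_⟩
  · show liftF [false] x ([false] ++ []) = [false]
    rw [liftF_app_pre, hnil]
    rfl
  · exact liftF_app_not (by simp) x

lemma liftF_mem_St_true {x : G} (hA : liftF [true] x ∈ Auto) (hnil : x [] = []) :
    liftF [true] x ∈ St := by
  refine ⟨hA, ?_, ?_⟩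
  · exact liftF_app_not (by simp) x
  · show liftF [true] x ([true] ++ []) = [true]
    rw [liftF_app_pre, hnil]
    rfl

lemma sec_liftF_false (x : G) (h : liftF [false] x ∈ St) : sec ⟨liftF [false] x, h⟩ = x := by
  apply Equiv.ext
  intro w
  rw [sec_apply]
  have h1 : (false :: w : List Bool) = [false] ++ w := rfl
  show (liftF [false] x (false :: w)).tail = x w
  rw [h1, liftF_app_pre]
  rfl

lemma sec_liftF_true (x : G) (h : liftF [true] x ∈ St) : sec ⟨liftF [true] x, h⟩ = 1 := by
  apply Equiv.ext
  intro w
  rw [sec_apply]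
  show (liftF [true] x (false :: w)).tail = w
  rw [liftF_app_not (by simp) x]
  rfl

----------------------------------------------------------------
-- pointwise simp lemmas for lifts at depth one
----------------------------------------------------------------

@[simp] lemma aF_aIF (w : List Bool) : aF (aIF w) = w := (inv_all w).1
@[simp] lemma bF_bIF (w : List Bool) : bF (bIF w) = w := (inv_all w).2.1
@[simp] lemma aIF_aF (w : List Bool) : aIF (aF w) = w := (inv_all w).2.2.1
@[simp] lemma bIF_bF (w : List Bool) : bIF (bF w) = w := (inv_all w).2.2.2

@[simp] lemma liftF_false_cons (x : G) (w : List Bool) :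
    liftF [false] x (false :: w) = false :: x w := by
  show liftF [false] x ([false] ++ w) = false :: x w
  rw [liftF_app_pre]; rfl

@[simp] lemma liftF_false_cons' (x : G) (w : List Bool) :
    liftF [false] x (true :: w) = true :: w := liftF_app_not (by simp) x

@[simp] lemma liftF_false_nil (x : G) : liftF [false] x [] = [] :=
  liftF_app_not (by simp) x

@[simp] lemma liftF_true_cons (x : G) (w : List Bool) :
    liftF [true] x (true :: w) = true :: x w := by
  show liftF [true] x ([true] ++ w) = true :: x w
  rw [liftF_app_pre]; rfl

@[simp] lemma liftF_true_cons' (x : G) (w : List Bool) :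
    liftF [true] x (false :: w) = false :: w := liftF_app_not (by simp) x

@[simp] lemma liftF_true_nil (x : G) : liftF [true] x [] = [] :=
  liftF_app_not (by simp) x

----------------------------------------------------------------
-- conjugation identities
----------------------------------------------------------------

/-- conjugating the `false`-subtree lift by `a` gives the `true`-subtree lift -/
lemma id_conj_a (k : G) : a⁻¹ * liftF [false] k * a = liftF [true] k := by
  apply Equiv.ext
  intro u
  rcases u with _ | ⟨e, w⟩
  · simp [Equiv.Perm.mul_apply, aF, aIF]
  · cases e <;> simp [Equiv.Perm.mul_apply, aF, bF, aIF, bIF]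

lemma sec_inv (p : ↥St) : sec p⁻¹ = (sec p)⁻¹ := map_inv secHom p

/-- conjugating the `false`-subtree lift by a stabilizer element -/
lemma id_conj_st (p : ↥St) (k : G) :
    p.1 * liftF [false] k * (p.1)⁻¹ = liftF [false] (sec p * k * (sec p)⁻¹) := by
  apply Equiv.ext
  intro u
  rw [Equiv.Perm.mul_apply, Equiv.Perm.mul_apply]
  rcases u with _ | ⟨e, w⟩
  · have h1 : (p.1)⁻¹ ([] : List Bool) = [] := by
      have := auto_nil (St.inv_mem p.2).1
      simpa using this
    rw [h1, liftF_false_nil, auto_nil p.2.1, liftF_false_nil]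
  · cases e
    · have h1 : (p.1)⁻¹ (false :: w) = false :: (sec p)⁻¹ w := by
        have := st_false' p⁻¹ w
        rw [sec_inv] at this
        simpa using this
      rw [h1, liftF_false_cons, st_false' p, liftF_false_cons]
      simp [Equiv.Perm.mul_apply]
    · have h1 := st_true (St.inv_mem p.2) w
      have h1' : (p.1)⁻¹ (true :: w) = true :: ((p.1)⁻¹ (true :: w)).tail := by
        simpa using h1
      rw [h1', liftF_false_cons', ← h1']
      rw [(show p.1 ((p.1)⁻¹ (true :: w)) = true :: w from Equiv.apply_symm_apply _ _), liftF_false_cons']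

/-- the key explicit relation: the lift of `[b,a]` is `[a²,b]` -/
lemma id_base : liftF [false] (b * a * b⁻¹ * a⁻¹) = (a * a) * b * (a * a)⁻¹ * b⁻¹ := by
  apply Equiv.ext
  intro u
  rcases u with _ | ⟨e, w⟩
  · simp [Equiv.Perm.mul_apply, mul_inv_rev, aF, bF, aIF, bIF]
  · cases e <;> simp [Equiv.Perm.mul_apply, mul_inv_rev, aF, bF, aIF, bIF]

----------------------------------------------------------------
-- the subgroup K (normal closure of cc in Gam) and K₂ = [K,K]
----------------------------------------------------------------

def KgenSet : Set G := {x | ∃ g ∈ Gam, x = g * cc * g⁻¹}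

def K : Subgroup G := Subgroup.closure KgenSet

lemma K_le_Gam : K ≤ Gam := by
  rw [K, closure_le]
  rintro x ⟨g, hg, rfl⟩
  exact Gam.mul_mem (Gam.mul_mem hg cc_mem_Gam) (Gam.inv_mem hg)

lemma cc_mem_K : cc ∈ K := by
  apply Subgroup.subset_closure
  exact ⟨1, Gam.one_mem, by group⟩

lemma K_conj {g x : G} (hg : g ∈ Gam) (hx : x ∈ K) : g * x * g⁻¹ ∈ K := by
  have hle : K ≤ Subgroup.comap (MulAut.conj g).toMonoidHom K := by
    rw [K, closure_le]
    rintro y ⟨h, hh, rfl⟩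
    have h2 : (MulAut.conj g).toMonoidHom (h * cc * h⁻¹) = (g * h) * cc * (g * h)⁻¹ := by
      simp only [MulEquiv.coe_toMonoidHom, MulAut.conj_apply]
      group
    have h3 : (g * h) * cc * (g * h)⁻¹ ∈ K :=
      Subgroup.subset_closure ⟨g * h, Gam.mul_mem hg hh, rfl⟩
    simp only [SetLike.mem_coe, mem_comap, h2]
    exact h3
  have h4 := hle hx
  rw [mem_comap] at h4
  simpa only [MulEquiv.coe_toMonoidHom, MulAut.conj_apply] using h4

/-- every element of Gam is the section of a stabilizer element of Gam -/
lemma exists_st_sec {g : G} (hg : g ∈ Gam) :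
    ∃ p : ↥St, p.1 ∈ Gam ∧ sec p = g := by
  have hle : Gam ≤ Subgroup.map secHom (Subgroup.comap St.subtype Gam) := by
    rw [Gam, closure_le]
    rintro x (rfl | rfl)
    · exact ⟨⟨b, b_mem_St⟩, mem_comap.mpr b_mem, sec_b _⟩
    · exact ⟨⟨a * a, a2_mem_St⟩, mem_comap.mpr (Gam.mul_mem a_mem a_mem),
        sec_a2 _⟩
  obtain ⟨p, hp, hsec⟩ := hle hg
  exact ⟨p, by simpa [mem_comap, Subgroup.mem_subgroupOf] using hp, hsec⟩

lemma liftF_cc_mem_K : liftF [false] cc ∈ K := by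
  have h1 : liftF [false] cc⁻¹ ∈ K := by
    have e1 : cc⁻¹ = b * a * b⁻¹ * a⁻¹ := by rw [cc]; group
    have e2 : (a * a) * b * (a * a)⁻¹ * b⁻¹ = (a * cc * a⁻¹) * cc := by rw [cc]; group
    rw [e1, id_base, e2]
    exact K.mul_mem (Subgroup.subset_closure ⟨a, a_mem, rfl⟩) cc_mem_K
  have h2 : liftF [false] cc = (liftF [false] cc⁻¹)⁻¹ := by
    rw [liftF_inv, inv_inv]
  rw [h2]
  exact K.inv_mem h1

lemma K_liftF {x : G} (hx : x ∈ K) : liftF [false] x ∈ K := by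
  have hle : K ≤ Subgroup.comap (liftFHom [false]) K := by
    rw [K, closure_le]
    rintro y ⟨g, hg, rfl⟩
    obtain ⟨p, hpG, hsec⟩ := exists_st_sec hg
    have h1 : liftF [false] (g * cc * g⁻¹) = p.1 * liftF [false] cc * (p.1)⁻¹ := by
      rw [id_conj_st, hsec]
    simp only [SetLike.mem_coe, mem_comap]
    show liftF [false] (g * cc * g⁻¹) ∈ K
    rw [h1]
    exact K_conj hpG liftF_cc_mem_K
  have := hle hx
  rwa [mem_comap] at this

lemma K_liftT {x : G} (hx : x ∈ K) : liftF [true] x ∈ K := by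
  have h1 : liftF [true] x = a⁻¹ * liftF [false] x * a := (id_conj_a x).symm
  rw [h1]
  have h2 := K_conj (Gam.inv_mem a_mem) (K_liftF hx)
  simpa using h2

lemma K_liftW (v : List Bool) {x : G} (hx : x ∈ K) : liftF v x ∈ K := by
  induction v with
  | nil => rwa [liftF_nil]
  | cons e v ih =>
    rw [liftF_cons]
    cases e
    · exact K_liftF ih
    · exact K_liftT ih

/-- the second derived step: K₂ = [K,K] -/
def K₂ : Subgroup G := ⁅K, K⁆

lemma K₂_le_K : K₂ ≤ K := by
  rw [K₂, Subgroup.commutator_def, closure_le]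
  rintro x ⟨g₁, hg₁, g₂, hg₂, rfl⟩
  rw [commutatorElement_def]
  exact K.mul_mem (K.mul_mem (K.mul_mem hg₁ hg₂) (K.inv_mem hg₁)) (K.inv_mem hg₂)

lemma K₂_le_Gam : K₂ ≤ Gam := le_trans K₂_le_K K_le_Gam

lemma K₂_liftW (v : List Bool) {x : G} (hx : x ∈ K₂) : liftF v x ∈ K₂ := by
  have hle : K₂ ≤ Subgroup.comap (liftFHom v) K₂ := by
    rw [K₂, Subgroup.commutator_def, closure_le]
    rintro x ⟨g₁, hg₁, g₂, hg₂, rfl⟩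
    simp only [SetLike.mem_coe, mem_comap]
    rw [map_commutatorElement]
    exact commutator_mem_commutator (K_liftW v hg₁) (K_liftW v hg₂)
  have := hle hx
  rwa [mem_comap] at this

lemma K₂_liftF {x : G} (hx : x ∈ K₂) : liftF [false] x ∈ K₂ := K₂_liftW [false] hx

----------------------------------------------------------------
-- section values on lifts of K-elements
----------------------------------------------------------------

lemma mem_St_liftF_K {x : G} (hx : x ∈ K) : liftF [false] x ∈ St :=
  liftF_mem_St_false (Gam_le_Auto (K_le_Gam (K_liftF hx)))
    (auto_nil (Gam_le_Auto (K_le_Gam hx)))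

lemma mem_St_liftT_K {x : G} (hx : x ∈ K) : liftF [true] x ∈ St :=
  liftF_mem_St_true (Gam_le_Auto (K_le_Gam (K_liftT hx)))
    (auto_nil (Gam_le_Auto (K_le_Gam hx)))

lemma secFun_liftF_K {x : G} (hx : x ∈ K) : secFun (liftF [false] x) = x := by
  rw [secFun_eq (mem_St_liftF_K hx)]
  exact sec_liftF_false x _

lemma secFun_liftT_K {x : G} (hx : x ∈ K) : secFun (liftF [true] x) = 1 := by
  rw [secFun_eq (mem_St_liftT_K hx)]
  exact sec_liftF_true x _

lemma secFun_comm {x y : G} (hx : x ∈ St) (hy : y ∈ St) :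
    secFun (x * y * x⁻¹ * y⁻¹) =
      secFun x * secFun y * (secFun x)⁻¹ * (secFun y)⁻¹ := by
  rw [secFun_mul (St.mul_mem (St.mul_mem hx hy) (St.inv_mem hx)) (St.inv_mem hy),
    secFun_mul (St.mul_mem hx hy) (St.inv_mem hx), secFun_mul hx hy,
    secFun_inv hx, secFun_inv hy]

----------------------------------------------------------------
-- the two witnesses
----------------------------------------------------------------

/-- auxiliary element whose fourfold section is `b` -/
def Xb : G :=
  cc * liftF [false] (liftF [false] (cc * cc)) * cc⁻¹ *
    (liftF [false] (liftF [false] (cc * cc)))⁻¹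

/-- auxiliary element whose fourfold section is `a` -/
def Xa : G :=
  liftF [false] (cc * liftF [false] (liftF [false] cc) * cc⁻¹ *
    (liftF [false] (liftF [false] cc))⁻¹)

lemma cc2_mem_K : cc * cc ∈ K := K.mul_mem cc_mem_K cc_mem_K

lemma mb_mem_K : liftF [false] (liftF [false] (cc * cc)) ∈ K := K_liftF (K_liftF cc2_mem_K)

lemma ma_mem_K : liftF [false] (liftF [false] cc) ∈ K := K_liftF (K_liftF cc_mem_K)

lemma Xb_mem_K₂ : Xb ∈ K₂ := by
  have h := commutator_mem_commutator (H₁ := K) (H₂ := K) cc_mem_K mb_mem_K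
  rwa [commutatorElement_def] at h

lemma Ya_mem_K₂ :
    cc * liftF [false] (liftF [false] cc) * cc⁻¹ *
      (liftF [false] (liftF [false] cc))⁻¹ ∈ K₂ := by
  have h := commutator_mem_commutator (H₁ := K) (H₂ := K) cc_mem_K ma_mem_K
  rwa [commutatorElement_def] at h

lemma Xa_mem_K₂ : Xa ∈ K₂ := K₂_liftF Ya_mem_K₂

-- chain for a generic commutator [cc, liftF^2 z] with z ∈ K
lemma comm_chain {z : G} (hz : z ∈ K) :
    (cc * liftF [false] (liftF [false] z) * cc⁻¹ *
        (liftF [false] (liftF [false] z))⁻¹) ∈ St ∧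
      secFun (cc * liftF [false] (liftF [false] z) * cc⁻¹ *
        (liftF [false] (liftF [false] z))⁻¹) =
          liftF [true] z * (liftF [false] z)⁻¹ ∧
      liftF [true] z * (liftF [false] z)⁻¹ ∈ St ∧
      secFun (liftF [true] z * (liftF [false] z)⁻¹) = z⁻¹ := by
  have hmK : liftF [false] (liftF [false] z) ∈ K := K_liftF (K_liftF hz)
  have hmSt : liftF [false] (liftF [false] z) ∈ St := mem_St_liftF_K (K_liftF hz)
  have hXSt : (cc * liftF [false] (liftF [false] z) * cc⁻¹ *
      (liftF [false] (liftF [false] z))⁻¹) ∈ St :=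
    St.mul_mem (St.mul_mem (St.mul_mem cc_mem_St hmSt) (St.inv_mem cc_mem_St))
      (St.inv_mem hmSt)
  have hltSt : liftF [true] z ∈ St := mem_St_liftT_K hz
  have hlfSt : liftF [false] z ∈ St := mem_St_liftF_K hz
  refine ⟨hXSt, ?_, St.mul_mem hltSt (St.inv_mem hlfSt), ?_⟩
  · rw [secFun_comm cc_mem_St hmSt, secFun_cc, secFun_liftF_K (K_liftF hz), inv_inv]
    rw [← id_conj_a z]
  · rw [secFun_mul hltSt (St.inv_mem hlfSt), secFun_liftT_K hz, secFun_inv hlfSt,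
      secFun_liftF_K hz, one_mul]

----------------------------------------------------------------
-- the domain subgroup Q and the fourfold-section homomorphism Phi
----------------------------------------------------------------

/-- elements of K₂ all of whose first four iterated sections are defined,
with the fourth landing in Gam -/
def Q : Subgroup G where
  carrier := {x | x ∈ K₂ ∧ x ∈ St ∧ secFun x ∈ St ∧ secFun (secFun x) ∈ St ∧
    secFun (secFun (secFun x)) ∈ St ∧ secFun (secFun (secFun (secFun x))) ∈ Gam}
  one_mem' := by
    refine ⟨K₂.one_mem, St.one_mem, ?_⟩
    rw [secFun_one]
    refine ⟨St.one_mem, ?_⟩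
    rw [secFun_one]
    refine ⟨St.one_mem, ?_⟩
    rw [secFun_one]
    exact ⟨St.one_mem, by rw [secFun_one]; exact Gam.one_mem⟩
  mul_mem' := by
    rintro x y ⟨hx0, hx1, hx2, hx3, hx4, hx5⟩ ⟨hy0, hy1, hy2, hy3, hy4, hy5⟩
    refine ⟨K₂.mul_mem hx0 hy0, St.mul_mem hx1 hy1, ?_⟩
    rw [secFun_mul hx1 hy1]
    refine ⟨St.mul_mem hx2 hy2, ?_⟩
    rw [secFun_mul hx2 hy2]
    refine ⟨St.mul_mem hx3 hy3, ?_⟩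
    rw [secFun_mul hx3 hy3]
    refine ⟨St.mul_mem hx4 hy4, ?_⟩
    rw [secFun_mul hx4 hy4]
    exact Gam.mul_mem hx5 hy5
  inv_mem' := by
    rintro x ⟨hx0, hx1, hx2, hx3, hx4, hx5⟩
    refine ⟨K₂.inv_mem hx0, St.inv_mem hx1, ?_⟩
    rw [secFun_inv hx1]
    refine ⟨St.inv_mem hx2, ?_⟩
    rw [secFun_inv hx2]
    refine ⟨St.inv_mem hx3, ?_⟩
    rw [secFun_inv hx3]
    refine ⟨St.inv_mem hx4, ?_⟩
    rw [secFun_inv hx4]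
    exact Gam.inv_mem hx5

lemma Q_le_K₂ : Q ≤ K₂ := fun x hx => hx.1

/-- the fourfold section homomorphism from Q to Gam -/
noncomputable def Phi : ↥Q →* ↥Gam :=
  MonoidHom.mk' (fun x => ⟨secFun (secFun (secFun (secFun x.1))), x.2.2.2.2.2.2⟩)
    (by
      rintro ⟨x, hx0, hx1, hx2, hx3, hx4, hx5⟩ ⟨y, hy0, hy1, hy2, hy3, hy4, hy5⟩
      apply Subtype.ext
      show secFun (secFun (secFun (secFun (x * y)))) = _
      rw [secFun_mul hx1 hy1, secFun_mul hx2 hy2, secFun_mul hx3 hy3,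
        secFun_mul hx4 hy4]
      rfl)

lemma Xb_chain : Xb ∈ Q ∧ secFun (secFun (secFun (secFun Xb))) = b := by
  obtain ⟨h1, h2, h3, h4⟩ := comm_chain cc2_mem_K
  have e1 : secFun ((cc * cc)⁻¹) = a * a := by
    rw [secFun_inv (St.mul_mem cc_mem_St cc_mem_St), secFun_mul cc_mem_St cc_mem_St,
      secFun_cc, mul_inv_rev, inv_inv]
  have hc2St : (cc * cc)⁻¹ ∈ St := St.inv_mem (St.mul_mem cc_mem_St cc_mem_St)
  have e2 : secFun (secFun (secFun (secFun Xb))) = b := by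
    show secFun (secFun (secFun (secFun (cc * liftF [false] (liftF [false] (cc * cc)) *
      cc⁻¹ * (liftF [false] (liftF [false] (cc * cc)))⁻¹)))) = b
    rw [h2, h4, e1, secFun_a2]
  refine ⟨⟨Xb_mem_K₂, h1, ?_, ?_, ?_, ?_⟩, e2⟩
  · show secFun Xb ∈ St
    rw [show secFun Xb = liftF [true] (cc * cc) * (liftF [false] (cc * cc))⁻¹ from h2]
    exact h3
  · show secFun (secFun Xb) ∈ St
    rw [show secFun Xb = liftF [true] (cc * cc) * (liftF [false] (cc * cc))⁻¹ from h2, h4]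
    exact hc2St
  · show secFun (secFun (secFun Xb)) ∈ St
    rw [show secFun Xb = liftF [true] (cc * cc) * (liftF [false] (cc * cc))⁻¹ from h2,
      h4, e1]
    exact a2_mem_St
  · show secFun (secFun (secFun (secFun Xb))) ∈ Gam
    rw [e2]
    exact b_mem

lemma Xa_chain : Xa ∈ Q ∧ secFun (secFun (secFun (secFun Xa))) = a := by
  obtain ⟨h1, h2, h3, h4⟩ := comm_chain cc_mem_K
  have hYK : (cc * liftF [false] (liftF [false] cc) * cc⁻¹ *
      (liftF [false] (liftF [false] cc))⁻¹) ∈ K := K₂_le_K Ya_mem_K₂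
  have e0 : secFun Xa = cc * liftF [false] (liftF [false] cc) * cc⁻¹ *
      (liftF [false] (liftF [false] cc))⁻¹ := secFun_liftF_K hYK
  have hXaSt : Xa ∈ St := mem_St_liftF_K hYK
  have einv : secFun (cc⁻¹) = a := by
    rw [secFun_inv cc_mem_St, secFun_cc, inv_inv]
  have e4 : secFun (secFun (secFun (secFun Xa))) = a := by
    rw [e0, h2, h4, einv]
  refine ⟨⟨Xa_mem_K₂, hXaSt, ?_, ?_, ?_, ?_⟩, e4⟩
  · rw [e0]; exact h1
  · rw [e0, h2]; exact h3
  · rw [e0, h2, h4]; exact St.inv_mem cc_mem_St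
  · rw [e4]; exact a_mem

lemma Phi_surjective : Function.Surjective Phi := by
  have hrange : Phi.range = ⊤ := by
    rw [eq_top_iff]
    have htop : Subgroup.closure ((Subgroup.closure {a, b}).subtype ⁻¹' {a, b}) = ⊤ :=
      Subgroup.closure_preimage_eq_top {a, b}
    have hGam : (Gam.subtype ⁻¹' {a, b} : Set ↥Gam) ⊆ (Phi.range : Set ↥Gam) := by
      rintro x hx
      rcases hx with hax | hbx
      · refine ⟨⟨Xa, Xa_chain.1⟩, ?_⟩
        apply Subtype.ext
        show secFun (secFun (secFun (secFun Xa))) = x.1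
        rw [Xa_chain.2]
        exact hax.symm
      · refine ⟨⟨Xb, Xb_chain.1⟩, ?_⟩
        apply Subtype.ext
        show secFun (secFun (secFun (secFun Xb))) = x.1
        rw [Xb_chain.2]
        exact hbx.symm
    calc (⊤ : Subgroup ↥Gam) = Subgroup.closure (Gam.subtype ⁻¹' {a, b}) := htop.symm
      _ ≤ Phi.range := (closure_le _).mpr hGam
  intro y
  have : y ∈ Phi.range := by rw [hrange]; trivial
  exact this

----------------------------------------------------------------
-- permutations with disjoint supports commute
----------------------------------------------------------------

lemma commute_of_disjoint {α : Type*} (s t : Equiv.Perm α) (S T : Set α)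
    (hs : ∀ u, s u ≠ u → u ∈ S) (ht : ∀ u, t u ≠ u → u ∈ T)
    (hd : ∀ u, u ∈ S → u ∈ T → False) : Commute s t := by
  have hsS : ∀ u, s u ≠ u → s u ∈ S := by
    intro u h
    apply hs
    intro he
    exact h (s.injective he)
  have htT : ∀ u, t u ≠ u → t u ∈ T := by
    intro u h
    apply ht
    intro he
    exact h (t.injective he)
  apply Equiv.ext
  intro u
  rw [Equiv.Perm.mul_apply, Equiv.Perm.mul_apply]
  by_cases h1 : s u = u <;> by_cases h2 : t u = u
  · simp [h1, h2]
  · -- s fixes u, t moves u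
    have htu : t u ∈ T := htT u h2
    have hstu : s (t u) = t u := by
      by_contra hne
      exact hd (t u) (hs _ hne) htu
    rw [h1, hstu]
  · have hsu : s u ∈ S := hsS u h1
    have htsu : t (s u) = s u := by
      by_contra hne
      exact hd (s u) hsu (ht _ hne)
    rw [h2, htsu]
  · exact absurd (hd u (hs u h1) (ht u h2)) (fun h => h)

lemma liftF_support {v u : List Bool} {x : G} (h : liftF v x u ≠ u) : v <+: u := by
  by_contra hn
  exact h (liftF_app_not hn x)

lemma conj_lift_support {p : G} (hp : p ∈ Auto) {v u : List Bool} {x : G}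
    (h : (p * liftF v x * p⁻¹) u ≠ u) : p v <+: u := by
  rw [Equiv.Perm.mul_apply, Equiv.Perm.mul_apply] at h
  have h1 : liftF v x (p⁻¹ u) ≠ p⁻¹ u := by
    intro he
    rw [he] at h
    exact h (Equiv.apply_symm_apply p u)
  obtain ⟨t, ht⟩ := liftF_support h1
  obtain ⟨sx, hsx⟩ := auto_pre hp v t
  have : u = p v ++ sx := by
    rw [← hsx, ht, (show p (p⁻¹ u) = u from Equiv.apply_symm_apply p u)]
  exact ⟨sx, this.symm⟩

lemma commute_conj_lift {p : G} (hp : p ∈ Auto) {v : List Bool} (hpv : p v ≠ v)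
    (x y : G) : Commute (p * liftF v x * p⁻¹) (liftF v y) := by
  apply commute_of_disjoint _ _ {u | p v <+: u} {u | v <+: u}
  · exact fun u h => conj_lift_support hp h
  · exact fun u h => liftF_support h
  · intro u h1 h2
    apply hpv
    have e1 : p v = take (p v).length u := prefix_iff_eq_take.mp h1
    have e2 : v = take v.length u := prefix_iff_eq_take.mp h2
    have e3 : (p v).length = v.length := auto_len hp v
    rw [e3] at e1
    rw [e1, ← e2]

----------------------------------------------------------------
-- the commutator trick
----------------------------------------------------------------

lemma trick {p : G} (hp : p ∈ Auto) {v : List Bool} (hpv : p v ≠ v) (x y : G) :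
    ⁅⁅p, liftF v x⁆, liftF v y⁆ = liftF v ⁅x⁻¹, y⁆ := by
  set u := p * liftF v x * p⁻¹ with hu
  set w := (liftF v x)⁻¹ with hw
  set t := liftF v y with ht
  have h1 : Commute u t := commute_conj_lift hp hpv x y
  have hWl : w * t * w⁻¹ * t⁻¹ = liftF v (x⁻¹ * y * x * y⁻¹) := by
    rw [hw, ht, liftF_mul, liftF_mul, liftF_mul, liftF_inv, liftF_inv, liftF_inv, inv_inv]
  have h2 : Commute u (w * t * w⁻¹ * t⁻¹) := by
    rw [hWl]
    exact commute_conj_lift hp hpv x _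
  have key : u * (w * t * w⁻¹ * t⁻¹) * u⁻¹ = w * t * w⁻¹ * t⁻¹ := by
    rw [h2.eq, mul_inv_cancel_right]
  have huw : ⁅p, liftF v x⁆ = u * w := by
    rw [commutatorElement_def, hu, hw]
  rw [huw, commutatorElement_def]
  have e1 : u * w * t * (u * w)⁻¹ * t⁻¹ = u * w * t * w⁻¹ * (u⁻¹ * t⁻¹) := by group
  have e2 : u⁻¹ * t⁻¹ = t⁻¹ * u⁻¹ := (h1.inv_left.inv_right).eq
  rw [e1, e2]
  have e3 : u * w * t * w⁻¹ * (t⁻¹ * u⁻¹) = u * (w * t * w⁻¹ * t⁻¹) * u⁻¹ := by group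
  rw [e3, key, hWl]
  have e4 : x⁻¹ * y * x * y⁻¹ = ⁅x⁻¹, y⁆ := by
    rw [commutatorElement_def, inv_inv]
  rw [e4]

----------------------------------------------------------------
-- main theorem
----------------------------------------------------------------

theorem Gam_normal_subgroup_maps_onto' (N : Subgroup ↥Gam) (hNormal : N.Normal)
    (hN : N ≠ ⊥) :
    ∃ H : Subgroup ↥Gam, H ≤ N ∧ ∃ φ : ↥H →* ↥Gam, Function.Surjective φ := by
  classical
  -- extract a nontrivial element of N
  have hex : ∃ n : ↥Gam, n ∈ N ∧ n ≠ 1 := by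
    by_contra h
    push_neg at h
    exact hN ((Subgroup.eq_bot_iff_forall N).mpr h)
  obtain ⟨n, hnN, hn1⟩ := hex
  set g₀ : G := n.1 with hg₀
  have hg₀Gam : g₀ ∈ Gam := n.2
  have hg₀Auto : g₀ ∈ Auto := Gam_le_Auto hg₀Gam
  have hg₀ne : g₀ ≠ 1 := by
    intro h
    apply hn1
    apply Subtype.ext
    exact h
  -- a moved vertex
  have hv : ∃ v : List Bool, g₀ v ≠ v := by
    by_contra h
    push_neg at h
    exact hg₀ne (Equiv.ext h)
  obtain ⟨v, hvne⟩ := hv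
  -- NN : the underlying subgroup of G
  set NN : Subgroup G := Subgroup.map Gam.subtype N with hNN
  have hg₀NN : g₀ ∈ NN := ⟨n, hnN, rfl⟩
  have hNNGam : ∀ {q : G}, q ∈ NN → q ∈ Gam := by
    rintro q ⟨m, hm, rfl⟩
    exact m.2
  have hNNconj : ∀ {m q : G}, m ∈ Gam → q ∈ NN → m * q * m⁻¹ ∈ NN := by
    rintro m q hm ⟨n', hn', rfl⟩
    refine ⟨⟨m, hm⟩ * n' * ⟨m, hm⟩⁻¹, hNormal.conj_mem n' hn' ⟨m, hm⟩, rfl⟩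
  have hNNcomm1 : ∀ {m q : G}, m ∈ Gam → q ∈ NN → ⁅m, q⁆ ∈ NN := by
    intro m q hm hq
    rw [commutatorElement_def]
    have h2 : m * q * m⁻¹ ∈ NN := hNNconj hm hq
    have h3 : (m * q * m⁻¹) * q⁻¹ ∈ NN := NN.mul_mem h2 (NN.inv_mem hq)
    exact h3
  have hNNcomm2 : ∀ {q m : G}, q ∈ NN → m ∈ Gam → ⁅q, m⁆ ∈ NN := by
    intro q m hq hm
    rw [commutatorElement_def]
    have h2 : m * q⁻¹ * m⁻¹ ∈ NN := hNNconj hm (NN.inv_mem hq)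
    have h3 : q * (m * q⁻¹ * m⁻¹) ∈ NN := NN.mul_mem hq h2
    have e : q * (m * q⁻¹ * m⁻¹) = q * m * q⁻¹ * m⁻¹ := by group
    rwa [e] at h3
  -- every lift of an element of K₂ lies in NN
  have hlift : ∀ {x : G}, x ∈ K₂ → liftF v x ∈ NN := by
    intro x hx
    have hle : K₂ ≤ Subgroup.comap (liftFHom v) NN := by
      rw [K₂, Subgroup.commutator_def, closure_le]
      rintro z ⟨g₁, hg₁, g₂, hg₂, rfl⟩
      simp only [SetLike.mem_coe, mem_comap]
      show liftF v ⁅g₁, g₂⁆ ∈ NN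
      have htr := trick hg₀Auto hvne g₁⁻¹ g₂
      rw [inv_inv] at htr
      rw [← htr]
      have hl1 : liftF v g₁⁻¹ ∈ Gam := K_le_Gam (K_liftW v (K.inv_mem hg₁))
      have hl2 : liftF v g₂ ∈ Gam := K_le_Gam (K_liftW v hg₂)
      exact hNNcomm2 (hNNcomm2 hg₀NN hl1) hl2
    have := hle hx
    rwa [mem_comap] at this
  -- the embedding of Q into Gam via the lift at v
  have hQGam : ∀ x : ↥Q, liftF v x.1 ∈ Gam := fun x => K_le_Gam (K_liftW v (K₂_le_K x.2.1))
  set Θ : ↥Q →* ↥Gam := MonoidHom.mk' (fun x => ⟨liftF v x.1, hQGam x⟩)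
    (by
      intro x y
      apply Subtype.ext
      show liftF v (x.1 * y.1) = liftF v x.1 * liftF v y.1
      rw [liftF_mul]) with hΘ
  have hΘinj : Function.Injective Θ := by
    intro x y h
    apply Subtype.ext
    apply liftF_inj (v := v)
    exact congrArg Subtype.val h
  refine ⟨Θ.range, ?_, ?_⟩
  · rintro y ⟨x, rfl⟩
    have h1 : liftF v x.1 ∈ NN := hlift x.2.1
    obtain ⟨n', hn', hval⟩ := h1
    have h2 : Θ x = n' := by
      apply Subtype.ext
      show liftF v x.1 = n'.1
      exact hval.symm
    rw [h2]
    exact hn'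
  · have e := MonoidHom.ofInjective hΘinj
    refine ⟨Phi.comp e.symm.toMonoidHom, ?_⟩
    rw [MonoidHom.coe_comp]
    exact Function.Surjective.comp Phi_surjective e.symm.surjective


/-- Every nontrivial normal subgroup `N` of `Γ` contains a subgroup `H`
that admits a surjective group homomorphism onto `Γ`. -/
theorem Gam_normal_subgroup_maps_onto (N : Subgroup ↥Gam) (hNormal : N.Normal)
    (hN : N ≠ ⊥) :
    ∃ H : Subgroup ↥Gam, H ≤ N ∧ ∃ φ : ↥H →* ↥Gam, Function.Surjective φ := by
  exact Gam_normal_subgroup_maps_onto' N hNormal hN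

end PinkGroup
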